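/- Let G = G_l ⊗ G_r be a true twin composition, and assume D_k(H) ≠ ∅ for each H ∈ {G, G_l, G_r} and each 0 ≤ k ≤ |TS(H)|. Then γ_0(G) = min{γ_i(G_l) + γ_i(G_r) : 0 ≤ i ≤ min(|TS(G_l)|, |TS(G_r)|)}. -/

import Mathlib

/-!
In a set `S` of `G` with a perfect matching, each pair either stays inside one side or joins a
twin vertex of `Gl` to a twin vertex of `Gr`. If `i` pairs cross, removing their endpoints
leaves admissible sets for `γ_i(Gl)` and `γ_i(Gr)`, while domination of non-twin vertices
happens inside each side. Conversely, admissible sets for `γ_i` on both sides glue to one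
for `γ_0(G)`, pairing the `i` unmatched twin vertices of one side with those of the other:
every twin vertex of `Gl` is adjacent to every twin vertex of `Gr`.
-/

/-- A finite simple graph on a subset of an ambient vertex type `α`,
together with a designated twin set `TS ⊆ verts`. -/
structure TSGraph (α : Type*) where
  verts : Finset α
  Adj : α → α → Prop
  symm : ∀ u v, Adj u v → Adj v u
  irrefl : ∀ u, ¬ Adj u u
  adj_mem : ∀ u v, Adj u v → u ∈ verts ∧ v ∈ verts
  TS : Finset α
  TS_sub : TS ⊆ verts

namespace TSGraph

variable {α : Type*} [DecidableEq α]

/-- `f` encodes a perfect matching of the subgraph of `G` induced by `S`: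
every vertex of `S` is paired with an adjacent vertex of `S`, involutively. -/
def IsPM (G : TSGraph α) (S : Finset α) (f : α → α) : Prop :=
  ∀ v ∈ S, f v ∈ S ∧ G.Adj v (f v) ∧ f (f v) = v

/-- `S ⊆ V(G)` dominates `V(G) − TS(G)` and, for some `X ⊆ S ∩ TS(G)` of size `k`,
the subgraph induced by `S − X` has a perfect matching. -/
def Adm (G : TSGraph α) (k : ℕ) (S : Finset α) : Prop :=
  S ⊆ G.verts ∧
  (∀ v ∈ G.verts, v ∉ G.TS → v ∈ S ∨ ∃ u ∈ S, G.Adj u v) ∧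
  ∃ X ⊆ S ∩ G.TS, X.card = k ∧ ∃ f, G.IsPM (S \ X) f

/-- Membership in the family `D_k(G)`: admissible of minimum cardinality. -/
def memD (G : TSGraph α) (k : ℕ) (S : Finset α) : Prop :=
  G.Adm k S ∧ ∀ S', G.Adm k S' → S.card ≤ S'.card

/-- `D_k(G) ≠ ∅`. -/
def DkNonempty (G : TSGraph α) (k : ℕ) : Prop := ∃ S, G.memD k S

/-- `D_k(G) ≠ ∅` for all `0 ≤ k ≤ |TS(G)|`. -/
def AllDkNonempty (G : TSGraph α) : Prop := ∀ k ≤ G.TS.card, G.DkNonempty k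

/-- `γ_k(G)`: the common cardinality of the members of `D_k(G)`. -/
noncomputable def gamma (G : TSGraph α) (k : ℕ) : ℕ :=
  sInf {n | ∃ S, G.Adm k S ∧ S.card = n}

/-- A paired-dominating set of `G`. -/
def IsPDS (G : TSGraph α) (D : Finset α) : Prop :=
  D ⊆ G.verts ∧
  (∀ v ∈ G.verts, v ∈ D ∨ ∃ u ∈ D, G.Adj u v) ∧
  ∃ f, G.IsPM D f

/-- `γ_p(G)`: the paired-domination number. -/
noncomputable def gammaP (G : TSGraph α) : ℕ :=
  sInf {n | ∃ D, G.IsPDS D ∧ D.card = n}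

/-- Membership in `D_p(G)`: minimum-cardinality paired-dominating sets. -/
def memDp (G : TSGraph α) (D : Finset α) : Prop :=
  G.IsPDS D ∧ D.card = G.gammaP

/-- `min(G) = min { γ_k(G) : 0 ≤ k ≤ |TS(G)| }`. -/
noncomputable def minVal (G : TSGraph α) : ℕ :=
  sInf {n | ∃ k ≤ G.TS.card, G.gamma k = n}

/-- `α(G)`: the smallest `k` with `γ_k(G) = min(G)`. -/
noncomputable def alphaVal (G : TSGraph α) : ℕ :=
  sInf {k | k ≤ G.TS.card ∧ G.gamma k = G.minVal}

/-- `β(G)`: the largest `k` with `γ_k(G) = min(G)`. -/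
noncomputable def betaVal (G : TSGraph α) : ℕ :=
  sSup {k | k ≤ G.TS.card ∧ G.gamma k = G.minVal}

/-- Membership in `Ψ(G)`: sets in some `D_k(G)` of cardinality `min(G)`. -/
def memPsi (G : TSGraph α) (D : Finset α) : Prop :=
  (∃ k, k ≤ G.TS.card ∧ G.memD k D) ∧ D.card = G.minVal

/-- Equation (2) holds for `G`. -/
def Eq2Holds (G : TSGraph α) : Prop :=
  ∀ k ≤ G.TS.card,
    (k ≤ G.alphaVal → G.gamma k = G.minVal + G.alphaVal - k) ∧
    (G.betaVal ≤ k → G.gamma k = G.minVal + k - G.betaVal) ∧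
    (G.alphaVal < k → k < G.betaVal → Even (k - G.alphaVal) → G.gamma k = G.minVal) ∧
    (G.alphaVal < k → k < G.betaVal → ¬ Even (k - G.alphaVal) → G.gamma k = G.minVal + 1)

/-- `G = Gl ⊗ Gr` (true twin composition). -/
def IsTrueTwin (G Gl Gr : TSGraph α) : Prop :=
  Disjoint Gl.verts Gr.verts ∧
  G.verts = Gl.verts ∪ Gr.verts ∧
  (∀ u v, G.Adj u v ↔ Gl.Adj u v ∨ Gr.Adj u v ∨
    (u ∈ Gl.TS ∧ v ∈ Gr.TS) ∨ (u ∈ Gr.TS ∧ v ∈ Gl.TS)) ∧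
  G.TS = Gl.TS ∪ Gr.TS

/-- `G = Gl ⊙ Gr` (false twin composition). -/
def IsFalseTwin (G Gl Gr : TSGraph α) : Prop :=
  Disjoint Gl.verts Gr.verts ∧
  G.verts = Gl.verts ∪ Gr.verts ∧
  (∀ u v, G.Adj u v ↔ Gl.Adj u v ∨ Gr.Adj u v) ∧
  G.TS = Gl.TS ∪ Gr.TS

/-- `G = Gl ⊕ Gr` (attachment composition). -/
def IsAttach (G Gl Gr : TSGraph α) : Prop :=
  Disjoint Gl.verts Gr.verts ∧
  G.verts = Gl.verts ∪ Gr.verts ∧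
  (∀ u v, G.Adj u v ↔ Gl.Adj u v ∨ Gr.Adj u v ∨
    (u ∈ Gl.TS ∧ v ∈ Gr.TS) ∨ (u ∈ Gr.TS ∧ v ∈ Gl.TS)) ∧
  G.TS = Gl.TS

/-- The twin-set graph `G` arises from a decomposition tree all of whose associated
twin-set graphs satisfy the property `P`. -/
inductive FromDecompTree (P : TSGraph α → Prop) : TSGraph α → Prop where
  | single (G : TSGraph α) (v : α) (hv : G.verts = {v}) (hts : G.TS = {v})
      (hadj : ∀ u w, ¬ G.Adj u w) (hP : P G) : FromDecompTree P G
  | ttwin (G Gl Gr : TSGraph α) (hl : FromDecompTree P Gl) (hr : FromDecompTree P Gr)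
      (h : IsTrueTwin G Gl Gr) (hP : P G) : FromDecompTree P G
  | ftwin (G Gl Gr : TSGraph α) (hl : FromDecompTree P Gl) (hr : FromDecompTree P Gr)
      (h : IsFalseTwin G Gl Gr) (hP : P G) : FromDecompTree P G
  | attach (G Gl Gr : TSGraph α) (hl : FromDecompTree P Gl) (hr : FromDecompTree P Gr)
      (h : IsAttach G Gl Gr) (hP : P G) : FromDecompTree P G

end TSGraph

namespace TSGraph

variable {α : Type*}

lemma IsPM.mono {G H : TSGraph α} {A : Finset α} {f : α → α} (hGH : ∀ u v, G.Adj u v → H.Adj u v)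
    (hf : G.IsPM A f) : H.IsPM A f := fun v hv =>
  let ⟨hfv, hadj, hinv⟩ := hf v hv
  ⟨hfv, hGH _ _ hadj, hinv⟩

variable [DecidableEq α]

section Gamma

variable {G : TSGraph α} {k : ℕ} {S : Finset α}

lemma gamma_le_card (hS : G.Adm k S) : G.gamma k ≤ S.card :=
  Nat.sInf_le (show S.card ∈ {n | ∃ S, G.Adm k S ∧ S.card = n} from ⟨S, hS, rfl⟩)

lemma exists_adm_card_eq_gamma (h : ∃ S, G.Adm k S) : ∃ S, G.Adm k S ∧ S.card = G.gamma k := by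
  obtain ⟨S, hS⟩ := h
  exact Nat.sInf_mem (⟨S.card, S, hS, rfl⟩ : {n | ∃ S, G.Adm k S ∧ S.card = n}.Nonempty)

lemma AllDkNonempty.exists_adm_card_eq_gamma (hG : G.AllDkNonempty) (hk : k ≤ G.TS.card) :
    ∃ S, G.Adm k S ∧ S.card = G.gamma k :=
  TSGraph.exists_adm_card_eq_gamma ((hG k hk).imp fun _ hS => hS.1)

lemma Adm.le_card_ts (hS : G.Adm k S) : k ≤ G.TS.card := by
  obtain ⟨-, -, X, hX, rfl, -⟩ := hS
  exact Finset.card_le_card (hX.trans Finset.inter_subset_right)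

lemma Adm.exists_isPM_of_zero (hS : G.Adm 0 S) : ∃ f, G.IsPM S f := by
  obtain ⟨-, -, X, -, hX, hf⟩ := hS
  rwa [Finset.card_eq_zero.mp hX, Finset.sdiff_empty] at hf

end Gamma

namespace IsPM

variable {G : TSGraph α} {S A B : Finset α} {f g : α → α}

lemma piecewise (hf : G.IsPM A f) (hg : G.IsPM B g) (hAB : Disjoint A B) :
    G.IsPM (A ∪ B) (A.piecewise f g) := by
  intro v hv
  by_cases hvA : v ∈ A
  · obtain ⟨hfv, hadj, hinv⟩ := hf v hvA
    simp [hvA, hfv, hadj, hinv]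
  · have hvB : v ∈ B := (Finset.mem_union.mp hv).resolve_left hvA
    obtain ⟨hgv, hadj, hinv⟩ := hg v hvB
    have hgvA : g v ∉ A := Finset.disjoint_right.mp hAB hgv
    simp [hvA, hgvA, hgv, hadj, hinv]

lemma card_filter_inter_comm (hf : G.IsPM S f) (A B : Finset α) :
    ((S ∩ A).filter (f · ∈ B)).card = ((S ∩ B).filter (f · ∈ A)).card := by
  have hmaps : ∀ {A B}, ∀ v ∈ (S ∩ A).filter (f · ∈ B), f v ∈ (S ∩ B).filter (f · ∈ A) ∧
      f (f v) = v := by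
    intro A B v hv
    simp only [Finset.mem_filter, Finset.mem_inter] at hv ⊢
    obtain ⟨hfv, -, hinv⟩ := hf v hv.1.1
    exact ⟨⟨⟨hfv, hv.2⟩, by rw [hinv]; exact hv.1.2⟩, hinv⟩
  exact Finset.card_nbij' f f (fun v hv => (hmaps v hv).1) (fun v hv => (hmaps v hv).1)
    (fun v hv => (hmaps v hv).2) (fun v hv => (hmaps v hv).2)

end IsPM

lemma exists_isPM_of_card_eq {G : TSGraph α} {A B : Finset α} (hAB : Disjoint A B)
    (hcard : A.card = B.card) (hadj : ∀ a ∈ A, ∀ b ∈ B, G.Adj a b) : ∃ f, G.IsPM (A ∪ B) f := by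
  let e : A ≃ B := Finset.equivOfCardEq hcard
  refine ⟨fun v => if hv : v ∈ A then e ⟨v, hv⟩ else if hv : v ∈ B then e.symm ⟨v, hv⟩ else v, ?_⟩
  intro v hv
  rcases Finset.mem_union.mp hv with hvA | hvB
  · have hB := (e ⟨v, hvA⟩).2
    have hnA : (e ⟨v, hvA⟩ : α) ∉ A := Finset.disjoint_right.mp hAB hB
    simp [hvA, hnA, hB, hadj v hvA _ hB]
  · have hnA : v ∉ A := Finset.disjoint_right.mp hAB hvB
    have hA := (e.symm ⟨v, hvB⟩).2
    simp [hnA, hvB, hA, G.symm _ _ (hadj _ hA v hvB)]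

namespace IsTrueTwin

open Finset

variable {G Gl Gr : TSGraph α} {S : Finset α} {u v : α}

lemma symm (h : IsTrueTwin G Gl Gr) : IsTrueTwin G Gr Gl := by
  obtain ⟨hd, hverts, hadj, hts⟩ := h
  exact ⟨hd.symm, by rw [hverts, union_comm], fun u v => by rw [hadj]; tauto,
    by rw [hts, union_comm]⟩

lemma adj_of_left (h : IsTrueTwin G Gl Gr) (huv : Gl.Adj u v) : G.Adj u v :=
  (h.2.2.1 u v).mpr (Or.inl huv)

lemma adj_of_mem_ts (h : IsTrueTwin G Gl Gr) (hu : u ∈ Gl.TS) (hv : v ∈ Gr.TS) : G.Adj u v :=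
  (h.2.2.1 u v).mpr (Or.inr (Or.inr (Or.inl ⟨hu, hv⟩)))

lemma adj_iff_of_mem_left (h : IsTrueTwin G Gl Gr) (hv : v ∈ Gl.verts) :
    G.Adj u v ↔ Gl.Adj u v ∨ u ∈ Gr.TS ∧ v ∈ Gl.TS := by
  have hvr : v ∉ Gr.verts := disjoint_left.mp h.1 hv
  rw [h.2.2.1]
  constructor
  · rintro (huv | huv | ⟨-, hv'⟩ | huv)
    · exact Or.inl huv
    · exact absurd (Gr.adj_mem _ _ huv).2 hvr
    · exact absurd (Gr.TS_sub hv') hvr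
    · exact Or.inr huv
  · rintro (huv | huv)
    exacts [Or.inl huv, Or.inr (Or.inr (Or.inr huv))]

lemma mem_ts_iff_of_mem_left (h : IsTrueTwin G Gl Gr) (hv : v ∈ Gl.verts) :
    v ∈ G.TS ↔ v ∈ Gl.TS := by
  rw [h.2.2.2, mem_union, or_iff_left fun hv' => disjoint_left.mp h.1 hv (Gr.TS_sub hv')]

lemma card_eq_card_inter_add (h : IsTrueTwin G Gl Gr) (hS : S ⊆ G.verts) :
    S.card = (S ∩ Gl.verts).card + (S ∩ Gr.verts).card := by
  rw [← card_union_of_disjoint (h.1.mono inter_subset_right inter_subset_right),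
    ← inter_union_distrib_left, inter_eq_left.mpr (h.2.1 ▸ hS)]

lemma dominates_of_left (h : IsTrueTwin G Gl Gr) {Sl : Finset α}
    (hdom : ∀ v ∈ Gl.verts, v ∉ Gl.TS → v ∈ Sl ∨ ∃ u ∈ Sl, Gl.Adj u v)
    (hv : v ∈ Gl.verts) (hvts : v ∉ G.TS) : v ∈ Sl ∨ ∃ u ∈ Sl, G.Adj u v := by
  rw [h.mem_ts_iff_of_mem_left hv] at hvts
  exact (hdom v hv hvts).imp_right fun ⟨u, hu, huv⟩ => ⟨u, hu, h.adj_of_left huv⟩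

lemma adm_union (h : IsTrueTwin G Gl Gr) {k : ℕ} {Sl Sr : Finset α} (hl : Gl.Adm k Sl)
    (hr : Gr.Adm k Sr) : G.Adm 0 (Sl ∪ Sr) := by
  obtain ⟨hSl, hdoml, Xl, hXl, hXlcard, fl, hfl⟩ := hl
  obtain ⟨hSr, hdomr, Xr, hXr, hXrcard, fr, hfr⟩ := hr
  have hd : Disjoint Sl Sr := h.1.mono hSl hSr
  have hXlSl : Xl ⊆ Sl := hXl.trans inter_subset_left
  have hXrSr : Xr ⊆ Sr := hXr.trans inter_subset_left
  refine ⟨h.2.1 ▸ union_subset_union hSl hSr, ?_, ∅, empty_subset _, rfl, ?_⟩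
  · intro v hv hvts
    rcases mem_union.mp (h.2.1 ▸ hv) with hv | hv
    · rcases h.dominates_of_left hdoml hv hvts with hvS | ⟨u, hu, huv⟩
      exacts [Or.inl (mem_union_left _ hvS), Or.inr ⟨u, mem_union_left _ hu, huv⟩]
    · rcases h.symm.dominates_of_left hdomr hv hvts with hvS | ⟨u, hu, huv⟩
      exacts [Or.inl (mem_union_right _ hvS), Or.inr ⟨u, mem_union_right _ hu, huv⟩]
  · obtain ⟨g, hg⟩ := exists_isPM_of_card_eq (G := G) (hd.mono hXlSl hXrSr)
      (hXlcard.trans hXrcard.symm) fun a ha b hb =>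
        h.adj_of_mem_ts (mem_inter.mp (hXl ha)).2 (mem_inter.mp (hXr hb)).2
    have hinner := (hfl.mono fun _ _ => h.adj_of_left).piecewise
      (hfr.mono fun _ _ => h.symm.adj_of_left) (hd.mono sdiff_subset sdiff_subset)
    have hdisj : Disjoint (Sl \ Xl ∪ Sr \ Xr) (Xl ∪ Xr) := by
      rw [disjoint_union_left, disjoint_union_right, disjoint_union_right]
      exact ⟨⟨sdiff_disjoint, hd.mono sdiff_subset hXrSr⟩,
        ⟨hd.symm.mono sdiff_subset hXlSl, sdiff_disjoint⟩⟩
    refine ⟨_, (congrArg (G.IsPM · _) ?_).mpr (hinner.piecewise hg hdisj)⟩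
    ext v
    simp only [sdiff_empty, mem_union, mem_sdiff]
    have := @hXlSl v
    have := @hXrSr v
    tauto

lemma adm_inter_left (h : IsTrueTwin G Gl Gr) {f : α → α} (hS : G.Adm 0 S) (hf : G.IsPM S f) :
    Gl.Adm ((S ∩ Gl.verts).filter (f · ∈ Gr.verts)).card (S ∩ Gl.verts) := by
  obtain ⟨hSG, hdom, -⟩ := hS
  refine ⟨inter_subset_right, ?_, _, ?_, rfl, f, ?_⟩
  · intro v hv hvts
    have hvG : v ∈ G.verts := h.2.1 ▸ mem_union_left _ hv
    rcases hdom v hvG (by rwa [h.mem_ts_iff_of_mem_left hv]) with hvS | ⟨u, hu, huv⟩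
    · exact Or.inl (mem_inter.mpr ⟨hvS, hv⟩)
    · have hul : Gl.Adj u v :=
        ((h.adj_iff_of_mem_left hv).mp huv).resolve_right fun h' => hvts h'.2
      exact Or.inr ⟨u, mem_inter.mpr ⟨hu, (Gl.adj_mem _ _ hul).1⟩, hul⟩
  · intro v hv
    obtain ⟨hvSl, hfvr⟩ := mem_filter.mp hv
    obtain ⟨hvS, hvl⟩ := mem_inter.mp hvSl
    have hvr : v ∉ Gr.verts := disjoint_left.mp h.1 hvl
    have hvts := ((h.symm.adj_iff_of_mem_left hfvr).mp (hf v hvS).2.1).resolve_left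
      fun h' => hvr (Gr.adj_mem _ _ h').1
    exact mem_inter.mpr ⟨hvSl, hvts.1⟩
  · intro v hv
    obtain ⟨hvSl, hvX⟩ := mem_sdiff.mp hv
    obtain ⟨hvS, hvl⟩ := mem_inter.mp hvSl
    obtain ⟨hfvS, hadj, hinv⟩ := hf v hvS
    have hvr : v ∉ Gr.verts := disjoint_left.mp h.1 hvl
    have hfvr : f v ∉ Gr.verts := fun hfvr => hvX (mem_filter.mpr ⟨hvSl, hfvr⟩)
    have hfvl : f v ∈ Gl.verts := (mem_union.mp (h.2.1 ▸ hSG hfvS)).resolve_right hfvr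
    have hfvX : f v ∉ (S ∩ Gl.verts).filter (f · ∈ Gr.verts) := by
      simp only [mem_filter, hinv]
      exact fun h' => hvr h'.2
    refine ⟨mem_sdiff.mpr ⟨mem_inter.mpr ⟨hfvS, hfvl⟩, hfvX⟩, ?_, hinv⟩
    exact ((h.adj_iff_of_mem_left hfvl).mp hadj).resolve_right fun h' => hvr (Gr.TS_sub h'.1)

end IsTrueTwin

end TSGraph

open TSGraph in
theorem stmt10_general {α : Type*} [DecidableEq α] (G Gl Gr : TSGraph α)
    (hcomp : IsTrueTwin G Gl Gr)
    (hGl : Gl.AllDkNonempty) (hGr : Gr.AllDkNonempty) :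
    G.gamma 0 =
      sInf {n | ∃ i ≤ min Gl.TS.card Gr.TS.card, Gl.gamma i + Gr.gamma i = n} := by
  set R := {n | ∃ i ≤ min Gl.TS.card Gr.TS.card, Gl.gamma i + Gr.gamma i = n}
  apply le_antisymm
  · obtain ⟨i, hi, hmin⟩ : sInf R ∈ R := Nat.sInf_mem ⟨_, 0, Nat.zero_le _, rfl⟩
    obtain ⟨Sl, hSl, hSlcard⟩ := hGl.exists_adm_card_eq_gamma (hi.trans (min_le_left _ _))
    obtain ⟨Sr, hSr, hSrcard⟩ := hGr.exists_adm_card_eq_gamma (hi.trans (min_le_right _ _))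
    calc G.gamma 0 ≤ (Sl ∪ Sr).card := gamma_le_card (hcomp.adm_union hSl hSr)
      _ ≤ Sl.card + Sr.card := Finset.card_union_le _ _
      _ = _ := by rw [hSlcard, hSrcard, hmin]
  · obtain ⟨Sl, hSl, -⟩ := hGl.exists_adm_card_eq_gamma (Nat.zero_le _)
    obtain ⟨Sr, hSr, -⟩ := hGr.exists_adm_card_eq_gamma (Nat.zero_le _)
    obtain ⟨S, hS, hScard⟩ := exists_adm_card_eq_gamma ⟨_, hcomp.adm_union hSl hSr⟩
    obtain ⟨f, hf⟩ := hS.exists_isPM_of_zero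
    have hl := hcomp.adm_inter_left hS hf
    have hr := hcomp.symm.adm_inter_left hS hf
    rw [← hf.card_filter_inter_comm] at hr
    have hmem : Gl.gamma _ + Gr.gamma _ ∈ R := ⟨_, le_min hl.le_card_ts hr.le_card_ts, rfl⟩
    calc sInf R ≤ Gl.gamma _ + Gr.gamma _ := Nat.sInf_le hmem
      _ ≤ (S ∩ Gl.verts).card + (S ∩ Gr.verts).card :=
        add_le_add (gamma_le_card hl) (gamma_le_card hr)
      _ = G.gamma 0 := by rw [← hScard, hcomp.card_eq_card_inter_add hS.1]

open TSGraph in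
/-- For a true twin composition `G = Gl ⊗ Gr` with all `D_k`
families nonempty,
`γ_0(G) = min { γ_i(Gl) + γ_i(Gr) : 0 ≤ i ≤ min(|TS(Gl)|, |TS(Gr)|) }`. -/
theorem stmt10 {α : Type*} [DecidableEq α] (G Gl Gr : TSGraph α)
    (hcomp : IsTrueTwin G Gl Gr)
    (hG : G.AllDkNonempty) (hGl : Gl.AllDkNonempty) (hGr : Gr.AllDkNonempty) :
    G.gamma 0 =
      sInf {n | ∃ i ≤ min Gl.TS.card Gr.TS.card, Gl.gamma i + Gr.gamma i = n} :=
  stmt10_general G Gl Gr hcomp hGl hGr
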